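/- arXiv:1311.2299 — 2 statements merged into one kernel-verified Lean document; each statement's English description precedes it below -/
import Mathlib

section
/- Let d ≥ 3 and ℓ ≥ 1. For any two rainbow edge colorings c₁, c₂ (with colors in a common set) of two disjoint complete d-ary trees with ℓ levels, m(c₁,c₂) ≥ (1 − Σ_{i=1}^{ℓ} i/d^{i}) · d^{2ℓ}. -/
/-!
A pair of leaves `(v, w)` fails to be rainbow only if some edge `e ∈ P(v)` and some edge
`f ∈ P(w)` receive the same color. As both colorings are injective, these matched pairs `(e, f)`
form a partial bijection between the edges of the two trees, so the bad pairs of leaves are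
covered by the products `L(e) × L(f)` of the leaf sets below matched edges, and AM-GM gives
`∑ |L(e)| |L(f)| ≤ ∑_e |L(e)|² = ∑_{i=1}^{ℓ} d^i (d^(ℓ-i))² = ∑_{i=1}^{ℓ} d^(2ℓ-i)`.
The last sum is at most `∑_{i=1}^{ℓ} i d^(2ℓ-i)`, which is the bound claimed.
-/

/-- An edge of the complete `d`-ary tree with `ℓ` levels: a nonempty sequence over `Fin d`
of length at most `ℓ`, indexing the vertex that the edge joins to its parent. -/
def TreeEdge (d ℓ : ℕ) : Type := {s : List (Fin d) // s ≠ [] ∧ s.length ≤ ℓ}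

/-- A leaf of the complete `d`-ary tree with `ℓ` levels: a sequence of length `ℓ`. -/
def TreeLeaf (d ℓ : ℕ) : Type := {s : List (Fin d) // s.length = ℓ}

/-- The root-to-leaf path `P(v)`: the set of (edges indexed by) nonempty prefixes of `v`. -/
def leafPath {d ℓ : ℕ} (v : TreeLeaf d ℓ) : Set (TreeEdge d ℓ) := {e | e.1 <+: v.1}

/-- The set of pairs of leaves `(v, w)` such that the combined path `P(v) ∪ P(w)` is
rainbow: `c₁` is injective on `P(v)`, `c₂` is injective on `P(w)`, and the color sets
`c₁(P(v))` and `c₂(P(w))` are disjoint. -/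
def rainbowPairs {C : Type*} {d ℓ : ℕ} (c₁ c₂ : TreeEdge d ℓ → C) :
    Set (TreeLeaf d ℓ × TreeLeaf d ℓ) :=
  {p | Set.InjOn c₁ (leafPath p.1) ∧ Set.InjOn c₂ (leafPath p.2) ∧
    Disjoint (c₁ '' leafPath p.1) (c₂ '' leafPath p.2)}

/-- `m(c₁,c₂)`: the number of pairs of leaves whose combined root-to-leaf paths are rainbow. -/
noncomputable def mPairs {C : Type*} {d ℓ : ℕ} (c₁ c₂ : TreeEdge d ℓ → C) : ℕ :=
  Nat.card (rainbowPairs c₁ c₂)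

open Finset

variable {d ℓ : ℕ}

instance : Fintype (TreeLeaf d ℓ) := inferInstanceAs (Fintype (List.Vector (Fin d) ℓ))

instance : Finite (TreeEdge d ℓ) :=
  Set.Finite.to_subtype (s := {s : List (Fin d) | s ≠ [] ∧ s.length ≤ ℓ})
    ((List.finite_length_le (Fin d) ℓ).subset fun _ h => h.2)

noncomputable instance : Fintype (TreeEdge d ℓ) := Fintype.ofFinite _

lemma card_treeLeaf (d ℓ : ℕ) : Fintype.card (TreeLeaf d ℓ) = d ^ ℓ := by
  show Fintype.card (List.Vector (Fin d) ℓ) = d ^ ℓ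
  simp

def leavesBelow (e : TreeEdge d ℓ) : Finset (TreeLeaf d ℓ) := {v | e.1 <+: v.1}

lemma mem_leavesBelow {e : TreeEdge d ℓ} {v : TreeLeaf d ℓ} :
    v ∈ leavesBelow e ↔ e ∈ leafPath v := by
  simp [leavesBelow, leafPath]

lemma card_leavesBelow (e : TreeEdge d ℓ) : #(leavesBelow e) = d ^ (ℓ - e.1.length) := by
  rw [← card_treeLeaf d, ← card_univ]
  refine card_nbij' (fun v => ⟨v.1.drop e.1.length, by simp [v.2]⟩)
    (fun w => ⟨e.1 ++ w.1, by rw [List.length_append, w.2]; have := e.2.2; omega⟩)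
    (fun _ _ => mem_coe.2 (mem_univ _))
    (fun w _ => mem_filter.2 ⟨mem_univ _, List.prefix_append _ _⟩) ?_
    (fun w _ => Subtype.ext (by simp))
  intro v hv
  obtain ⟨t, ht⟩ : e.1 <+: v.1 := by simpa [leavesBelow] using hv
  exact Subtype.ext (by simp [← ht])

lemma card_edges_of_length {i : ℕ} (hi : 1 ≤ i) (hiℓ : i ≤ ℓ) :
    #{e : TreeEdge d ℓ | e.1.length = i} = d ^ i := by
  rw [← card_treeLeaf d, ← card_univ]
  refine card_bij' (fun e he => ⟨e.1, (mem_filter.1 he).2⟩)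
    (fun w _ => ⟨w.1, List.ne_nil_of_length_pos (by rw [w.2]; omega), by rw [w.2]; omega⟩)
    (fun _ _ => mem_univ _) (fun w _ => mem_filter.2 ⟨mem_univ _, w.2⟩)
    (fun _ _ => rfl) (fun _ _ => rfl)

lemma sum_card_leavesBelow_sq :
    ∑ e : TreeEdge d ℓ, #(leavesBelow e) ^ 2 = ∑ i ∈ Icc 1 ℓ, d ^ i * (d ^ (ℓ - i)) ^ 2 := by
  rw [← sum_fiberwise_of_maps_to (g := fun e : TreeEdge d ℓ => e.1.length) (t := Icc 1 ℓ)
    fun e _ => mem_Icc.2 ⟨List.length_pos_of_ne_nil e.2.1, e.2.2⟩]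
  refine sum_congr rfl fun i hi => ?_
  obtain ⟨hi₁, hiℓ⟩ := mem_Icc.1 hi
  rw [← card_edges_of_length hi₁ hiℓ, card_eq_sum_ones, sum_mul, one_mul]
  refine sum_congr rfl fun e he => ?_
  rw [card_leavesBelow, (mem_filter.1 he).2]

lemma two_mul_sum_le_of_injOn {α β : Type*} [Fintype α] [Fintype β] [DecidableEq α]
    [DecidableEq β] {M : Finset (α × β)} (hfst : Set.InjOn Prod.fst (M : Set (α × β)))
    (hsnd : Set.InjOn Prod.snd (M : Set (α × β))) (a : α → ℕ) (b : β → ℕ) :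
    2 * ∑ q ∈ M, a q.1 * b q.2 ≤ ∑ x, a x ^ 2 + ∑ y, b y ^ 2 :=
  calc 2 * ∑ q ∈ M, a q.1 * b q.2
      ≤ ∑ q ∈ M, a q.1 ^ 2 + ∑ q ∈ M, b q.2 ^ 2 := by
        rw [mul_sum, ← sum_add_distrib]
        exact sum_le_sum fun q _ => (mul_assoc 2 _ _).symm.trans_le (two_mul_le_add_sq _ _)
    _ ≤ ∑ x, a x ^ 2 + ∑ y, b y ^ 2 := by
        rw [← sum_image (f := fun x => a x ^ 2) hfst, ← sum_image (f := fun y => b y ^ 2) hsnd]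
        exact add_le_add (sum_le_sum_of_subset (subset_univ _))
          (sum_le_sum_of_subset (subset_univ _))

lemma ncard_compl_rainbowPairs_le {C : Type*} {c₁ c₂ : TreeEdge d ℓ → C}
    (h₁ : Function.Injective c₁) (h₂ : Function.Injective c₂) :
    (rainbowPairs c₁ c₂)ᶜ.ncard ≤ ∑ i ∈ Icc 1 ℓ, d ^ i * (d ^ (ℓ - i)) ^ 2 := by
  classical
  set M : Finset (TreeEdge d ℓ × TreeEdge d ℓ) := {q | c₁ q.1 = c₂ q.2}
  have hM {q} : q ∈ (M : Set (TreeEdge d ℓ × TreeEdge d ℓ)) ↔ c₁ q.1 = c₂ q.2 := by simp [M]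
  have hfst : Set.InjOn Prod.fst (M : Set (TreeEdge d ℓ × TreeEdge d ℓ)) := by
    intro q hq r hr h
    exact Prod.ext h (h₂ (by rw [← hM.1 hq, ← hM.1 hr, h]))
  have hsnd : Set.InjOn Prod.snd (M : Set (TreeEdge d ℓ × TreeEdge d ℓ)) := by
    intro q hq r hr h
    exact Prod.ext (h₁ (by rw [hM.1 hq, hM.1 hr, h])) h
  have hcover :
      (rainbowPairs c₁ c₂)ᶜ ⊆ ↑(M.biUnion fun q => leavesBelow q.1 ×ˢ leavesBelow q.2) := by
    intro p hp
    have hmeet : ¬Disjoint (c₁ '' leafPath p.1) (c₂ '' leafPath p.2) :=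
      fun h => hp ⟨h₁.injOn, h₂.injOn, h⟩
    obtain ⟨_, ⟨e, he, rfl⟩, f, hf, hef⟩ := Set.not_disjoint_iff.1 hmeet
    simp only [coe_biUnion, Set.mem_iUnion, coe_product, Set.mem_prod, mem_coe, mem_leavesBelow]
    exact ⟨(e, f), hM.2 hef.symm, he, hf⟩
  have hamgm := two_mul_sum_le_of_injOn hfst hsnd (fun e => #(leavesBelow e))
    (fun e => #(leavesBelow e))
  rw [← sum_card_leavesBelow_sq]
  calc (rainbowPairs c₁ c₂)ᶜ.ncard
      ≤ #(M.biUnion fun q => leavesBelow q.1 ×ˢ leavesBelow q.2) :=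
        (Set.ncard_le_ncard hcover).trans_eq (Set.ncard_coe_finset _)
    _ ≤ ∑ q ∈ M, #(leavesBelow q.1) * #(leavesBelow q.2) :=
        card_biUnion_le.trans_eq (sum_congr rfl fun q _ => card_product _ _)
    _ ≤ ∑ e, #(leavesBelow e) ^ 2 := by omega

lemma pow_mul_pow_sub_sq_le {d : ℝ} (hd : 0 ≤ d) {i ℓ : ℕ} (hi : 1 ≤ i) (hiℓ : i ≤ ℓ) :
    d ^ i * (d ^ (ℓ - i)) ^ 2 ≤ i / d ^ i * d ^ (2 * ℓ) := by
  rcases hd.eq_or_lt with rfl | hd_pos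
  · simp [zero_pow (by omega : i ≠ 0)]
  have hsplit : d ^ (2 * ℓ) = d ^ i * (d ^ i * (d ^ (ℓ - i)) ^ 2) := by
    rw [← pow_mul, ← pow_add, ← pow_add]
    congr 1
    omega
  rw [hsplit, ← mul_assoc, div_mul_cancel₀ _ (pow_pos hd_pos i).ne']
  exact le_mul_of_one_le_left (by positivity) (by exact_mod_cast hi)

theorem stmt_1_general (d ℓ : ℕ) {C : Type*}
    (c₁ c₂ : TreeEdge d ℓ → C)
    (h₁ : Function.Injective c₁) (h₂ : Function.Injective c₂) :
    (mPairs c₁ c₂ : ℝ) ≥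
      (1 - ∑ i ∈ Finset.Icc 1 ℓ, (i : ℝ) / (d : ℝ) ^ i) * (d : ℝ) ^ (2 * ℓ) := by
  have htotal : mPairs c₁ c₂ + (rainbowPairs c₁ c₂)ᶜ.ncard = d ^ (2 * ℓ) := by
    rw [mPairs, Nat.card_coe_set_eq, Set.ncard_add_ncard_compl, Nat.card_eq_fintype_card,
      Fintype.card_prod, card_treeLeaf, ← pow_add, two_mul]
  have hbad : ((rainbowPairs c₁ c₂)ᶜ.ncard : ℝ) ≤ ∑ i ∈ Icc 1 ℓ, (i : ℝ) / d ^ i * d ^ (2 * ℓ) :=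
    calc ((rainbowPairs c₁ c₂)ᶜ.ncard : ℝ)
        ≤ ∑ i ∈ Icc 1 ℓ, (d : ℝ) ^ i * ((d : ℝ) ^ (ℓ - i)) ^ 2 := by
          exact_mod_cast ncard_compl_rainbowPairs_le h₁ h₂
      _ ≤ _ := sum_le_sum fun i hi =>
          pow_mul_pow_sub_sq_le d.cast_nonneg (mem_Icc.1 hi).1 (mem_Icc.1 hi).2
  have htotalℝ : (mPairs c₁ c₂ : ℝ) + (rainbowPairs c₁ c₂)ᶜ.ncard = (d : ℝ) ^ (2 * ℓ) := by
    exact_mod_cast htotal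
  rw [sub_mul, one_mul, sum_mul]
  linarith

/-- for `d ≥ 3`, `ℓ ≥ 1` and rainbow colorings `c₁, c₂` of two disjoint
complete `d`-ary trees with `ℓ` levels,
`m(c₁,c₂) ≥ (1 − Σ_{i=1}^{ℓ} i/d^i) · d^(2ℓ)`. -/
theorem stmt_1 (d ℓ : ℕ) (hd : 3 ≤ d) (hℓ : 1 ≤ ℓ) {C : Type*}
    (c₁ c₂ : TreeEdge d ℓ → C)
    (h₁ : Function.Injective c₁) (h₂ : Function.Injective c₂) :
    (mPairs c₁ c₂ : ℝ) ≥
      (1 - ∑ i ∈ Finset.Icc 1 ℓ, (i : ℝ) / (d : ℝ) ^ i) * (d : ℝ) ^ (2 * ℓ) :=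
  stmt_1_general d ℓ c₁ c₂ h₁ h₂
end

section
/- For every ℓ ≥ 1 there exist rainbow edge colorings c₁, c₂ (with colors in a common set) of two disjoint complete binary trees (d = 2) with ℓ levels such that m(c₁,c₂) ≤ 2^ℓ. In particular, the minimum κ_{ℓ,2} of m(c₁,c₂) over all pairs of rainbow colorings satisfies κ_{ℓ,2} ≤ 2^ℓ. -/
/-- Flip the last bit of an edge. -/
def flipLast {ℓ : ℕ} (e : TreeEdge 2 ℓ) : TreeEdge 2 ℓ :=
  ⟨e.1.dropLast ++ [e.1.getLast e.2.1 + 1], by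
    refine ⟨by simp, ?_⟩
    have h1 := List.length_pos_iff.mpr e.2.1
    have h2 := e.2.2
    simp only [List.length_append, List.length_dropLast, List.length_singleton]
    omega⟩

lemma flipLast_flipLast {ℓ : ℕ} (e : TreeEdge 2 ℓ) : flipLast (flipLast e) = e := by
  have hx : ∀ x : Fin 2, x + 1 + 1 = x := by decide
  apply Subtype.ext
  show ((e.1.dropLast ++ [e.1.getLast e.2.1 + 1]).dropLast ++
    [(e.1.dropLast ++ [e.1.getLast e.2.1 + 1]).getLast _ + 1]) = e.1
  simp only [List.dropLast_concat, List.getLast_concat, hx]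
  exact List.dropLast_append_getLast e.2.1

lemma flipLast_inj {ℓ : ℕ} : Function.Injective (flipLast (ℓ := ℓ)) :=
  Function.LeftInverse.injective flipLast_flipLast

lemma firstDiff {α : Type*} : ∀ (l₁ l₂ : List α), l₁.length = l₂.length → l₁ ≠ l₂ →
    ∃ k, ∃ (h₁ : k < l₁.length) (h₂ : k < l₂.length),
      l₁.take k = l₂.take k ∧ l₁[k] ≠ l₂[k] := by
  intro l₁ l₂
  induction l₁ generalizing l₂ with
  | nil => intro hlen hne; cases l₂ <;> simp_all
  | cons a t ih =>
    intro hlen hne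
    cases l₂ with
    | nil => simp at hlen
    | cons b t₂ =>
      by_cases hab : a = b
      · subst hab
        have ht : t ≠ t₂ := fun h => hne (by rw [h])
        obtain ⟨k, h₁, h₂, hpre, hget⟩ := ih t₂ (by simpa using hlen) ht
        exact ⟨k + 1, by simpa using h₁, by simpa using h₂, by simpa using hpre,
          by simpa using hget⟩
      · exact ⟨0, by simp, by simp, by simp, by simpa using hab⟩

lemma take_succ_eq {α : Type*} (l : List α) (k : ℕ) (hk : k < l.length) :
    l.take (k+1) = l.take k ++ [l[k]] := by
  rw [List.take_succ]
  simp [List.getElem?_eq_getElem hk]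

lemma rainbow_sub_diag {ℓ : ℕ} (c₁ : TreeEdge 2 ℓ → ℕ) (hc₁ : Function.Injective c₁) :
    rainbowPairs c₁ (c₁ ∘ flipLast) ⊆ {p | p.1 = p.2} := by
  rintro ⟨v, w⟩ ⟨-, -, hdisj⟩
  by_contra hne
  have hne' : v.1 ≠ w.1 := fun h => hne (Subtype.ext h)
  obtain ⟨k, h₁, h₂, hpre, hget⟩ := firstDiff v.1 w.1 (by rw [v.2, w.2]) hne'
  have hw := w.2
  have hlenw : (w.1.take (k+1)).length = k + 1 := by
    rw [List.length_take]; omega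
  have hnew : w.1.take (k+1) ≠ [] := by
    intro h; rw [h] at hlenw; simp at hlenw
  have hlew : (w.1.take (k+1)).length ≤ ℓ := by rw [hlenw]; omega
  set e' : TreeEdge 2 ℓ := ⟨w.1.take (k+1), hnew, hlew⟩ with he'
  have he'w : e' ∈ leafPath w := List.take_prefix _ _
  have hd : (w.1.take (k+1)).dropLast = w.1.take k := by
    rw [List.dropLast_eq_take, hlenw]
    simp [List.take_take]
  have hlast : (w.1.take (k+1)).getLast hnew = w.1[k] := by
    rw [List.getLast_eq_getElem]
    simp [hlenw, List.getElem_take]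
  have hflip : v.1[k] = w.1[k] + 1 := by
    have : ∀ a b : Fin 2, a ≠ b → a = b + 1 := by decide
    exact this _ _ hget
  have heq : (flipLast e').1 = v.1.take (k+1) := by
    show (w.1.take (k+1)).dropLast ++ [(w.1.take (k+1)).getLast hnew + 1] = _
    rw [hd, hlast, take_succ_eq v.1 k h₁, hpre, hflip]
  have hev : flipLast e' ∈ leafPath v := by
    show (flipLast e').1 <+: v.1
    rw [heq]; exact List.take_prefix _ _
  have : c₁ (flipLast e') ∈ (c₁ '' leafPath v) ∩ ((c₁ ∘ flipLast) '' leafPath w) :=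
    ⟨⟨_, hev, rfl⟩, ⟨e', he'w, rfl⟩⟩
  exact Set.disjoint_iff.mp hdisj this

lemma card_leaf (ℓ : ℕ) : Nat.card (TreeLeaf 2 ℓ) = 2 ^ ℓ := by
  have h : TreeLeaf 2 ℓ = List.Vector (Fin 2) ℓ := rfl
  rw [h, Nat.card_eq_fintype_card, card_vector]
  simp

/-- for every `ℓ ≥ 1` there are rainbow colorings `c₁, c₂` (with colors in a
common set) of two disjoint complete binary trees (`d = 2`) with `ℓ` levels such that
`m(c₁,c₂) ≤ 2^ℓ`; in particular the minimum `κ_{ℓ,2}` of `m(c₁,c₂)` over all pairs of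
rainbow colorings satisfies `κ_{ℓ,2} ≤ 2^ℓ`. -/
theorem stmt_10 (ℓ : ℕ) (hℓ : 1 ≤ ℓ) :
    (∃ c₁ c₂ : TreeEdge 2 ℓ → ℕ,
      Function.Injective c₁ ∧ Function.Injective c₂ ∧ mPairs c₁ c₂ ≤ 2 ^ ℓ) ∧
    sInf {n : ℕ | ∃ c₁ c₂ : TreeEdge 2 ℓ → ℕ,
      Function.Injective c₁ ∧ Function.Injective c₂ ∧ mPairs c₁ c₂ = n} ≤ 2 ^ ℓ := by
  have hfin : Finite (TreeLeaf 2 ℓ) := by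
    have h : TreeLeaf 2 ℓ = List.Vector (Fin 2) ℓ := rfl
    rw [h]; infer_instance
  obtain ⟨enc, henc⟩ : ∃ f : TreeEdge 2 ℓ → ℕ, Function.Injective f := by
    have : Countable (TreeEdge 2 ℓ) := by
      have h : TreeEdge 2 ℓ = {s : List (Fin 2) // s ≠ [] ∧ s.length ≤ ℓ} := rfl
      rw [h]; infer_instance
    exact Countable.exists_injective_nat _
  have key : mPairs enc (enc ∘ flipLast) ≤ 2 ^ ℓ := by
    have hsub := rainbow_sub_diag enc henc
    have hinj : Function.Injective
        (fun p : rainbowPairs enc (enc ∘ flipLast) => (p.1.1 : TreeLeaf 2 ℓ)) := by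
      rintro ⟨⟨v, w⟩, hp⟩ ⟨⟨v', w'⟩, hp'⟩ h
      simp only at h
      have e1 : v = w := hsub hp
      have e2 : v' = w' := hsub hp'
      subst h e1 e2; rfl
    calc mPairs enc (enc ∘ flipLast) ≤ Nat.card (TreeLeaf 2 ℓ) :=
          Nat.card_le_card_of_injective _ hinj
    _ = 2 ^ ℓ := card_leaf ℓ
  refine ⟨⟨enc, enc ∘ flipLast, henc, henc.comp flipLast_inj, key⟩, ?_⟩
  exact le_trans (Nat.sInf_le ⟨enc, enc ∘ flipLast, henc, henc.comp flipLast_inj, rfl⟩) key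
end
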